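/- For a positive integer n and an integer k, the following identity holds: Σ_{l=0}^{n} C(n+2, n−l) · (−1)^l · k^{l+1} = Σ_{l=1}^{n+1} (1 − (1−k)^l). -/
import Mathlib

open Finset

private lemma aux1 (n : ℕ) (k : ℤ) :
    (∑ l ∈ Finset.range (n + 1),
        ((n + 2).choose (n - l) : ℤ) * (-1) ^ l * k ^ (l + 1)) * k
      = (1 - k) ^ (n + 2) + (n + 2) * k - 1 := by
  rw [Finset.sum_mul]
  have h1 : ∀ l ∈ Finset.range (n + 1),
      ((n + 2).choose (n - l) : ℤ) * (-1) ^ l * k ^ (l + 1) * k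
        = (1 : ℤ) ^ (n - l) * (-k) ^ (n + 2 - (n - l)) * ((n + 2).choose (n - l) : ℤ) := by
    intro l hl
    rw [Finset.mem_range] at hl
    have hle : l ≤ n := Nat.lt_succ_iff.mp hl
    have h2 : n + 2 - (n - l) = l + 2 := by omega
    rw [h2]
    rw [neg_pow, pow_add]
    ring
  rw [Finset.sum_congr rfl h1]
  have hr := Finset.sum_range_reflect
    (fun m => (1 : ℤ) ^ m * (-k) ^ (n + 2 - m) * ((n + 2).choose m : ℤ)) (n + 1)
  simp only [Nat.add_sub_cancel] at hr
  rw [hr]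
  have hb := add_pow (1 : ℤ) (-k) (n + 2)
  rw [Finset.sum_range_succ, Finset.sum_range_succ] at hb
  have h3 : (1 : ℤ) + -k = 1 - k := by ring
  rw [h3] at hb
  simp only [Nat.choose_self, Nat.choose_succ_self_right] at hb
  have : ∑ m ∈ Finset.range (n + 1), (1 : ℤ) ^ m * (-k) ^ (n + 2 - m) * ((n + 2).choose m : ℤ)
      = (1 - k) ^ (n + 2)
        - 1 ^ (n + 1) * (-k) ^ (n + 2 - (n + 1)) * ((n : ℤ) + 2)
        - 1 ^ (n + 2) * (-k) ^ (n + 2 - (n + 2)) * 1 := by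
    push_cast at hb ⊢
    linarith [hb]
  rw [this]
  have h4 : n + 2 - (n + 1) = 1 := by omega
  have h5 : n + 2 - (n + 2) = 0 := by omega
  rw [h4, h5]
  ring

private lemma aux2 (n : ℕ) (k : ℤ) :
    (∑ l ∈ Finset.range (n + 1), (1 - (1 - k) ^ (l + 1))) * k
      = (1 - k) ^ (n + 2) + (n + 2) * k - 1 := by
  have hg := geom_sum_mul (1 - k) (n + 2)
  rw [Finset.sum_range_succ'] at hg
  rw [Finset.sum_sub_distrib, Finset.sum_const, Finset.card_range, sub_mul]
  simp only [nsmul_eq_mul, mul_one]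
  push_cast
  linear_combination hg

theorem stmt_10 (n : ℕ) (hn : 1 ≤ n) (k : ℤ) :
    ∑ l ∈ Finset.range (n + 1),
        ((n + 2).choose (n - l) : ℤ) * (-1) ^ l * k ^ (l + 1) =
      ∑ l ∈ Finset.range (n + 1), (1 - (1 - k) ^ (l + 1)) := by
  rcases eq_or_ne k 0 with hk | hk
  · subst hk
    simp
  · apply mul_right_cancel₀ hk
    rw [aux1, aux2]
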